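/- arXiv:1202.4969 — 4 statements merged into one kernel-verified Lean document; each statement's English description precedes it below -/
import Mathlib

section
/- For every t ≥ 0 and every x ∈ ℝ² with x ≠ 0, the Oseen vortex velocity field satisfies the heat equation componentwise: ∂_t Θ(x,t) = ΔΘ(x,t), where Δ is the Laplacian in the x-variables. -/
open MeasureTheory Filter
open scoped Classical

noncomputable section

abbrev E2 := EuclideanSpace ℝ (Fin 2)

/-- The vector `(a, b)` in `ℝ²` (with the Euclidean norm). -/
def vec2 (a b : ℝ) : E2 := (WithLp.equiv 2 (Fin 2 → ℝ)).symm ![a, b]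

/-- `x^⊥ = (-x₂, x₁)`. -/
def perp (x : E2) : E2 := vec2 (-(x 1)) (x 0)

/-- The Oseen vortex velocity field. -/
def theta (t : ℝ) (x : E2) : E2 :=
  if x = 0 then 0 else
    ((1 - Real.exp (-(‖x‖ ^ 2) / (4 * (1 + t)))) / (2 * Real.pi * ‖x‖ ^ 2)) • perp x

/-- The Oseen vorticity (Gaussian). -/
def Xi (t : ℝ) (x : E2) : ℝ :=
  (1 / (4 * Real.pi * (1 + t))) * Real.exp (-(‖x‖ ^ 2) / (4 * (1 + t)))

/-- The `i`-th standard basis vector of `ℝ²`. -/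
def e2 (i : Fin 2) : E2 := EuclideanSpace.single i 1

/-- The truncated Oseen vortex `u^χ(x,t) = χ̃(x/ρ) Θ(x,t)`. -/
def uchi (χt : E2 → ℝ) (ρ t : ℝ) (x : E2) : E2 := χt (ρ⁻¹ • x) • theta t x

/-!
Each component of the vortex has the form `Θᵢ(x,t) = G(t,|x|²) ℓᵢ(x)` with `ℓᵢ` linear and
`G(t,s) = (1 - e^{-s/(4(1+t))})/(2πs)`. For any profile `g` and linear form `ℓ` on an
`n`-dimensional inner product space, `Δ(g(|x|²) ℓ(x)) = (4 s g''(s) + (2n + 4) g'(s)) ℓ(x)` with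
`s = |x|²`: the cross term `2 ∇(g(|x|²)) · ∇ℓ = 4 g'(s) ℓ(x)` accounts for the extra `4`.
For `n = 2` the heat equation for `Θ` thus reduces to the scalar identity
`∂ₜG = 4 s ∂ₛ²G + 8 ∂ₛG`, checked by differentiating `G` explicitly.
-/

open scoped RealInnerProductSpace Topology

section RadialTimesLinear

variable {E : Type*} [NormedAddCommGroup E] [InnerProductSpace ℝ E]

theorem HasDerivAt.comp_norm_sq {g : ℝ → ℝ} {d : ℝ} {x : E} (hg : HasDerivAt g d (‖x‖ ^ 2)) :
    HasFDerivAt (fun y => g (‖y‖ ^ 2)) ((2 * d) • innerSL ℝ x) x := by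
  refine (hg.comp_hasFDerivAt x (hasFDerivAt_id x).norm_sq).congr_fderiv ?_
  ext v
  simp
  ring

theorem hasFDerivAt_radial_mul {g : ℝ → ℝ} {d : ℝ} (L : E →L[ℝ] ℝ) {y : E}
    (hg : HasDerivAt g d (‖y‖ ^ 2)) :
    HasFDerivAt (fun z => g (‖z‖ ^ 2) * L z) (g (‖y‖ ^ 2) • L + L y • (2 * d) • innerSL ℝ y) y :=
  hg.comp_norm_sq.mul L.hasFDerivAt

theorem fderiv_radial_mul_apply {g : ℝ → ℝ} {d : ℝ} (L : E →L[ℝ] ℝ) {y : E}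
    (hg : HasDerivAt g d (‖y‖ ^ 2)) (v : E) :
    fderiv ℝ (fun z => g (‖z‖ ^ 2) * L z) y v = g (‖y‖ ^ 2) * L v + 2 * d * ⟪v, y⟫ * L y := by
  rw [(hasFDerivAt_radial_mul L hg).fderiv]
  simp only [add_apply, smul_apply, innerSL_apply_apply, smul_eq_mul, real_inner_comm v]
  ring

theorem fderiv_fderiv_radial_mul_apply {g g' : ℝ → ℝ} {g'' : ℝ} (L : E →L[ℝ] ℝ) {x : E}
    (hg : ∀ᶠ s in 𝓝 (‖x‖ ^ 2), HasDerivAt g (g' s) s) (hg' : HasDerivAt g' g'' (‖x‖ ^ 2))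
    (v : E) :
    fderiv ℝ (fun y => fderiv ℝ (fun z => g (‖z‖ ^ 2) * L z) y v) x v
      = 4 * g' (‖x‖ ^ 2) * ⟪v, x⟫ * L v
        + (4 * g'' * ⟪v, x⟫ ^ 2 + 2 * g' (‖x‖ ^ 2) * ‖v‖ ^ 2) * L x := by
  have hg_near : ∀ᶠ y in 𝓝 x, HasDerivAt g (g' (‖y‖ ^ 2)) (‖y‖ ^ 2) :=
    ((continuous_norm.pow 2).tendsto x).eventually hg
  have hfirst : (fun y => fderiv ℝ (fun z => g (‖z‖ ^ 2) * L z) y v) =ᶠ[𝓝 x]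
      fun y => g (‖y‖ ^ 2) * L v + 2 * g' (‖y‖ ^ 2) * innerSL ℝ v y * L y :=
    hg_near.mono fun y hy => fderiv_radial_mul_apply L hy v
  have hsecond : HasFDerivAt
      (fun y => g (‖y‖ ^ 2) * L v + 2 * g' (‖y‖ ^ 2) * innerSL ℝ v y * L y) _ x :=
    (hg_near.self_of_nhds.comp_norm_sq.mul_const (L v)).add
      (((hg'.comp_norm_sq.const_mul 2).mul (innerSL ℝ v).hasFDerivAt).mul L.hasFDerivAt)
  rw [hfirst.fderiv_eq, hsecond.fderiv]
  simp only [add_apply, smul_apply, innerSL_apply_apply, smul_eq_mul, Pi.mul_apply,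
    real_inner_comm v, real_inner_self_eq_norm_sq]
  ring

theorem sum_fderiv_fderiv_radial_mul {ι : Type*} [Fintype ι] (b : OrthonormalBasis ι ℝ E)
    {g g' : ℝ → ℝ} {g'' : ℝ} (L : E →L[ℝ] ℝ) {x : E}
    (hg : ∀ᶠ s in 𝓝 (‖x‖ ^ 2), HasDerivAt g (g' s) s) (hg' : HasDerivAt g' g'' (‖x‖ ^ 2)) :
    ∑ j, fderiv ℝ (fun y => fderiv ℝ (fun z => g (‖z‖ ^ 2) * L z) y (b j)) x (b j)
      = (4 * ‖x‖ ^ 2 * g'' + (2 * Fintype.card ι + 4) * g' (‖x‖ ^ 2)) * L x := by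
  have hL : ∑ j, ⟪b j, x⟫ * L (b j) = L x := by
    simpa [map_sum] using congr_arg L (b.sum_repr' x)
  have hsq : ∑ j, ⟪b j, x⟫ ^ 2 = ‖x‖ ^ 2 := b.sum_sq_inner_right x
  have hterm : ∀ j, fderiv ℝ (fun y => fderiv ℝ (fun z => g (‖z‖ ^ 2) * L z) y (b j)) x (b j)
      = 4 * g' (‖x‖ ^ 2) * (⟪b j, x⟫ * L (b j)) + 4 * g'' * L x * ⟪b j, x⟫ ^ 2
        + 2 * g' (‖x‖ ^ 2) * L x := fun j => by
    rw [fderiv_fderiv_radial_mul_apply L hg hg', b.norm_eq_one]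
    ring
  rw [Finset.sum_congr rfl fun j _ => hterm j, Finset.sum_add_distrib, Finset.sum_add_distrib,
    ← Finset.mul_sum, ← Finset.mul_sum, hL, hsq, Finset.sum_const, Finset.card_univ, nsmul_eq_mul]
  ring

end RadialTimesLinear

section OseenProfile

open Real

variable {t s : ℝ}

def oseenProfile (t s : ℝ) : ℝ := (1 - exp (-s / (4 * (1 + t)))) / (2 * π * s)

def oseenProfileDeriv (t s : ℝ) : ℝ :=
  (exp (-s / (4 * (1 + t))) * s / (4 * (1 + t)) - (1 - exp (-s / (4 * (1 + t)))))
    / (2 * π * s ^ 2)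

def oseenProfileDeriv2 (t s : ℝ) : ℝ :=
  (-(exp (-s / (4 * (1 + t))) * s ^ 2 / (4 * (1 + t)) ^ 2)
    - 2 * (exp (-s / (4 * (1 + t))) * s / (4 * (1 + t)) - (1 - exp (-s / (4 * (1 + t))))))
    / (2 * π * s ^ 3)

theorem hasDerivAt_exp_neg_div (c s : ℝ) :
    HasDerivAt (fun s => exp (-s / c)) (-exp (-s / c) / c) s := by
  convert ((hasDerivAt_neg s).div_const c).exp using 1
  ring

theorem hasDerivAt_oseenProfile (hs : s ≠ 0) :
    HasDerivAt (oseenProfile t) (oseenProfileDeriv t s) s := by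
  have hden : HasDerivAt (fun s => 2 * π * s) (2 * π) s := by
    simpa using (hasDerivAt_id s).const_mul (2 * π)
  refine (((hasDerivAt_exp_neg_div _ s).const_sub 1).div hden (by positivity)).congr_deriv ?_
  unfold oseenProfileDeriv
  field_simp

theorem hasDerivAt_oseenProfileDeriv (ht : 1 + t ≠ 0) (hs : s ≠ 0) :
    HasDerivAt (oseenProfileDeriv t) (oseenProfileDeriv2 t s) s := by
  have hexp := hasDerivAt_exp_neg_div (4 * (1 + t)) s
  have hnum : HasDerivAt (fun s => exp (-s / (4 * (1 + t))) * s / (4 * (1 + t))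
      - (1 - exp (-s / (4 * (1 + t))))) _ s :=
    ((hexp.mul (hasDerivAt_id s)).div_const _).sub (hexp.const_sub 1)
  have hden : HasDerivAt (fun s => 2 * π * s ^ 2) (2 * π * (2 * s)) s := by
    simpa using (hasDerivAt_pow 2 s).const_mul (2 * π)
  refine (hnum.div hden (by positivity)).congr_deriv ?_
  unfold oseenProfileDeriv2 id
  field_simp
  ring

theorem hasDerivAt_oseenProfile_time (ht : 1 + t ≠ 0) (hs : s ≠ 0) :
    HasDerivAt (fun t => oseenProfile t s)
      (4 * s * oseenProfileDeriv2 t s + 8 * oseenProfileDeriv t s) t := by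
  have hexponent : HasDerivAt (fun t => -s / (4 * (1 + t))) (s / (4 * (1 + t) ^ 2)) t := by
    have hden : HasDerivAt (fun t => 4 * (1 + t)) 4 t := by
      simpa using ((hasDerivAt_id t).const_add 1).const_mul 4
    refine ((hasDerivAt_const t (-s)).div hden (by positivity)).congr_deriv ?_
    field_simp
    ring
  refine ((hexponent.exp.const_sub 1).div_const (2 * π * s)).congr_deriv ?_
  unfold oseenProfileDeriv oseenProfileDeriv2
  field_simp
  ring

end OseenProfile

def perpCoord : Fin 2 → (E2 →L[ℝ] ℝ) :=
  ![-EuclideanSpace.proj (1 : Fin 2), EuclideanSpace.proj (0 : Fin 2)]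

theorem perp_apply_eq_perpCoord (z : E2) (i : Fin 2) : perp z i = perpCoord i z := by
  fin_cases i <;> simp [perp, vec2, perpCoord]

theorem theta_apply_eq (t : ℝ) (z : E2) (i : Fin 2) :
    theta t z i = oseenProfile t (‖z‖ ^ 2) * perpCoord i z := by
  by_cases hz : z = 0
  · simp [theta, hz, oseenProfile]
  · simp [theta, hz, oseenProfile, perp_apply_eq_perpCoord]

theorem oseen_vortex_heat_equation (t : ℝ) (ht : 0 ≤ t) (x : E2) (hx : x ≠ 0) (i : Fin 2) :
    deriv (fun s : ℝ => theta s x i) t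
      = ∑ j : Fin 2,
          fderiv ℝ (fun y => fderiv ℝ (fun z => theta t z i) y (e2 j)) x (e2 j) := by
  have h1t : 1 + t ≠ 0 := by positivity
  have hs : ‖x‖ ^ 2 ≠ 0 := by positivity
  have hprofile : ∀ᶠ s in 𝓝 (‖x‖ ^ 2), HasDerivAt (oseenProfile t) (oseenProfileDeriv t s) s :=
    eventually_of_mem (isOpen_ne.mem_nhds hs) fun s hs => hasDerivAt_oseenProfile hs
  have hlaplacian := sum_fderiv_fderiv_radial_mul (EuclideanSpace.basisFun (Fin 2) ℝ)
    (perpCoord i) hprofile (hasDerivAt_oseenProfileDeriv h1t hs)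
  simp only [theta_apply_eq]
  rw [((hasDerivAt_oseenProfile_time h1t hs).mul_const _).deriv]
  simp only [EuclideanSpace.basisFun_apply] at hlaplacian
  rw [show e2 = fun j => EuclideanSpace.single j 1 from rfl, hlaplacian, Fintype.card_fin]
  ring
end
end

section
/- For every t ≥ 0 and every x ∈ ℝ² with x ≠ 0, the truncated Oseen vortex satisfies the identity (u^χ(·,t)·∇)u^χ(·,t)(x) = (1/2)∇|u^χ(x,t)|² + u^χ(x,t)^⊥ ω^χ(x,t) = −(x/|x|²) |u^χ(x,t)|², where ω^χ = ∂₁u^χ₂ − ∂₂u^χ₁ is the vorticity of u^χ. In particular the nonlinear term (u^χ·∇)u^χ is the gradient of a radially symmetric function. -/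
open MeasureTheory Filter
open scoped Classical

noncomputable section

@[simp] lemma perp_apply_zero (y : E2) : perp y 0 = -(y 1) := by
  simp [perp, vec2, WithLp.equiv_symm_apply]

@[simp] lemma perp_apply_one (y : E2) : perp y 1 = y 0 := by
  simp [perp, vec2, WithLp.equiv_symm_apply]

lemma inner_perp (y : E2) : (inner ℝ y (perp y) : ℝ) = 0 := by
  simp [PiLp.inner_apply, Fin.sum_univ_two, RCLike.inner_apply]
  ring

lemma normsq_decomp (y : E2) : ‖y‖ ^ 2 = y 0 ^ 2 + y 1 ^ 2 := by
  rw [← real_inner_self_eq_norm_sq]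
  simp only [PiLp.inner_apply, Fin.sum_univ_two, RCLike.inner_apply, conj_trivial]
  ring

lemma norm_perp (y : E2) : ‖perp y‖ = ‖y‖ := by
  have h : ‖perp y‖ ^ 2 = ‖y‖ ^ 2 := by
    rw [normsq_decomp, normsq_decomp y]; simp; ring
  have := congrArg Real.sqrt h
  rwa [Real.sqrt_sq (norm_nonneg _), Real.sqrt_sq (norm_nonneg _)] at this

@[simp] lemma e2_apply (j k : Fin 2) : e2 j k = if k = j then 1 else 0 := by
  simp [e2, EuclideanSpace.single_apply]

lemma ev_decomp (v : E2) : v = v 0 • e2 0 + v 1 • e2 1 := by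
  ext k
  fin_cases k <;> simp [e2, EuclideanSpace.single_apply]

lemma radial_fderiv_perp (f : E2 → ℝ) (x : E2)
    (hrad : ∀ y z : E2, ‖y‖ = ‖z‖ → f y = f z)
    (hf : DifferentiableAt ℝ f x) :
    fderiv ℝ f x (perp x) = 0 := by
  set γ : ℝ → E2 := fun s => Real.cos s • x + Real.sin s • perp x with hγdef
  have hγ : HasDerivAt γ (perp x) 0 := by
    have h1 := (Real.hasDerivAt_cos 0).smul_const x
    have h2 := (Real.hasDerivAt_sin 0).smul_const (perp x)
    have h := h1.add h2
    simp at h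
    exact h
  have hγ0 : γ 0 = x := by simp [hγdef]
  have hnorm : ∀ s, ‖γ s‖ = ‖x‖ := by
    intro s
    have h2 : ‖γ s‖ ^ 2 = ‖x‖ ^ 2 := by
      rw [← real_inner_self_eq_norm_sq, ← real_inner_self_eq_norm_sq]
      simp only [hγdef]
      rw [real_inner_add_add_self]
      rw [real_inner_smul_left, real_inner_smul_right,
          real_inner_smul_left, real_inner_smul_right,
          real_inner_smul_left, real_inner_smul_right]
      rw [inner_perp, real_inner_self_eq_norm_sq, real_inner_self_eq_norm_sq,
          norm_perp]
      linear_combination (‖x‖ ^ 2) * (Real.sin_sq_add_cos_sq s)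
    have := congrArg Real.sqrt h2
    rwa [Real.sqrt_sq (norm_nonneg _), Real.sqrt_sq (norm_nonneg _)] at this
  have hcomp : HasDerivAt (f ∘ γ) (fderiv ℝ f x (perp x)) 0 := by
    have hfd : HasFDerivAt f (fderiv ℝ f x) (γ 0) := hγ0 ▸ hf.hasFDerivAt
    exact hfd.comp_hasDerivAt 0 hγ
  have hconst : f ∘ γ = fun _ => f x := funext fun s => hrad _ _ (hnorm s)
  have h0 : HasDerivAt (fun _ : ℝ => f x) 0 0 := hasDerivAt_const _ _
  rw [hconst] at hcomp
  exact hcomp.unique h0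

def gfun (χt : E2 → ℝ) (ρ t : ℝ) (y : E2) : ℝ :=
  χt (ρ⁻¹ • y) * ((1 - Real.exp (-(‖y‖ ^ 2) / (4 * (1 + t)))) / (2 * Real.pi * ‖y‖ ^ 2))

lemma uchi_eq (χt : E2 → ℝ) (ρ t : ℝ) {y : E2} (hy : y ≠ 0) :
    uchi χt ρ t y = gfun χt ρ t y • perp y := by
  rw [uchi, theta, if_neg hy, gfun, smul_smul]

lemma diff_normsq : Differentiable ℝ (fun y : E2 => ‖y‖ ^ 2) := by
  have h : (fun y : E2 => ‖y‖ ^ 2) = fun y : E2 => (inner ℝ y y : ℝ) := by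
    funext y; rw [real_inner_self_eq_norm_sq]
  rw [h]
  exact fun y => differentiableAt_fun_id.inner ℝ differentiableAt_fun_id

lemma gfun_diff (χt : E2 → ℝ) (hχ : ContDiff ℝ (⊤ : ℕ∞) χt) (ρ t : ℝ) {x : E2} (hx : x ≠ 0) :
    DifferentiableAt ℝ (gfun χt ρ t) x := by
  have hsq : DifferentiableAt ℝ (fun y : E2 => ‖y‖ ^ 2) x := diff_normsq x
  have h1 : DifferentiableAt ℝ (fun y : E2 => χt (ρ⁻¹ • y)) x :=
    DifferentiableAt.comp x (hχ.differentiable (by simp) _)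
      ((differentiable_id.const_smul ρ⁻¹) x)
  have hdiv : DifferentiableAt ℝ (fun y : E2 => -(‖y‖ ^ 2) / (4 * (1 + t))) x :=
    by simp only [div_eq_mul_inv]; exact hsq.neg.mul_const _
  have h2 : DifferentiableAt ℝ (fun y : E2 => Real.exp (-(‖y‖ ^ 2) / (4 * (1 + t)))) x :=
    DifferentiableAt.comp (g := Real.exp) x Real.differentiable_exp.differentiableAt hdiv
  have hden : (2 * Real.pi * ‖x‖ ^ 2) ≠ 0 :=
    mul_ne_zero (by positivity) (pow_ne_zero _ (norm_ne_zero_iff.mpr hx))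
  have hnum : DifferentiableAt ℝ (fun y : E2 => 1 - Real.exp (-(‖y‖ ^ 2) / (4 * (1 + t)))) x :=
    (differentiableAt_const _).sub h2
  have hdenf : DifferentiableAt ℝ (fun y : E2 => 2 * Real.pi * ‖y‖ ^ 2) x :=
    hsq.const_mul _
  have hfrac : DifferentiableAt ℝ
      (fun y : E2 => (1 - Real.exp (-(‖y‖ ^ 2) / (4 * (1 + t)))) / (2 * Real.pi * ‖y‖ ^ 2)) x :=
    by simp only [div_eq_mul_inv]; exact hnum.mul (hdenf.inv hden)
  exact h1.mul hfrac

lemma gfun_radial (χt : E2 → ℝ) (hrad : ∀ x y : E2, ‖x‖ = ‖y‖ → χt x = χt y) (ρ t : ℝ) :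
    ∀ y z : E2, ‖y‖ = ‖z‖ → gfun χt ρ t y = gfun χt ρ t z := by
  intro y z h
  have h2 : ‖ρ⁻¹ • y‖ = ‖ρ⁻¹ • z‖ := by rw [norm_smul, norm_smul, h]
  rw [gfun, gfun, hrad _ _ h2, h]

lemma perp_smul (c : ℝ) (y : E2) : perp (c • y) = c • perp y := by
  ext k; fin_cases k <;> simp

lemma perp_perp (y : E2) : perp (perp y) = -y := by
  ext k; fin_cases k <;> simp


theorem truncated_oseen_nonlinear_term
    (χt : E2 → ℝ) (hχ_smooth : ContDiff ℝ (⊤ : ℕ∞) χt)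
    (hχ_radial : ∀ x y : E2, ‖x‖ = ‖y‖ → χt x = χt y)
    (hχ_zero : ∀ x : E2, ‖x‖ ≤ 1 → χt x = 0)
    (hχ_one : ∀ x : E2, 2 ≤ ‖x‖ → χt x = 1)
    (hχ_range : ∀ x : E2, χt x ∈ Set.Icc (0 : ℝ) 1)
    (ρ : ℝ) (hρ : 1 ≤ ρ) (t : ℝ) (ht : 0 ≤ t) (x : E2) (hx : x ≠ 0) (i : Fin 2) :
    (∑ j : Fin 2, uchi χt ρ t x j * fderiv ℝ (fun y => uchi χt ρ t y i) x (e2 j))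
        = (1/2) * fderiv ℝ (fun y => ‖uchi χt ρ t y‖ ^ 2) x (e2 i)
          + perp (uchi χt ρ t x) i
            * (fderiv ℝ (fun y => uchi χt ρ t y 1) x (e2 0)
               - fderiv ℝ (fun y => uchi χt ρ t y 0) x (e2 1)) ∧
      (∑ j : Fin 2, uchi χt ρ t x j * fderiv ℝ (fun y => uchi χt ρ t y i) x (e2 j))
        = -(x i / ‖x‖ ^ 2) * ‖uchi χt ρ t x‖ ^ 2 := by
  have hxn : ‖x‖ ≠ 0 := norm_ne_zero_iff.mpr hx
  set g := gfun χt ρ t with hgdef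
  have hgd : DifferentiableAt ℝ g x := gfun_diff χt hχ_smooth ρ t hx
  set D := fderiv ℝ g x with hDdef
  have hDp : D (perp x) = 0 := radial_fderiv_perp g x (gfun_radial χt hχ_radial ρ t) hgd
  have hmem : {y : E2 | y ≠ 0} ∈ nhds x := isOpen_compl_singleton.mem_nhds hx
  set P : Fin 2 → (E2 →L[ℝ] ℝ) := ![-(EuclideanSpace.proj 1), EuclideanSpace.proj 0] with hPdef
  have hPapp : ∀ (k : Fin 2) (v : E2), P k v = perp v k := by
    intro k v
    fin_cases k <;> simp [hPdef]
  have hcomp : ∀ k : Fin 2, fderiv ℝ (fun y => uchi χt ρ t y k) x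
      = g x • P k + perp x k • D := by
    intro k
    have h1 : (fun y => uchi χt ρ t y k) =ᶠ[nhds x] fun y => g y * P k y := by
      filter_upwards [hmem] with y hy
      rw [uchi_eq χt ρ t hy, hPapp]
      simp [hgdef]
    rw [h1.fderiv_eq, fderiv_fun_mul hgd (P k).differentiableAt, (P k).fderiv, hPapp, ← hDdef]
  have hIin : DifferentiableAt ℝ (fun y : E2 => (inner ℝ y y : ℝ)) x :=
    differentiableAt_fun_id.inner ℝ differentiableAt_fun_id
  have hNin : ∀ k : Fin 2, fderiv ℝ (fun y : E2 => (inner ℝ y y : ℝ)) x (e2 k) = 2 * x k := by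
    intro k
    rw [fderiv_inner_apply ℝ differentiableAt_fun_id differentiableAt_fun_id]
    simp only [fderiv_fun_id, ContinuousLinearMap.id_apply]
    rw [show (inner ℝ (e2 k) x : ℝ) = x k from by
      fin_cases k <;> simp [PiLp.inner_apply, RCLike.inner_apply, Fin.sum_univ_two],
      show (inner ℝ x (e2 k) : ℝ) = x k from by
      fin_cases k <;> simp [PiLp.inner_apply, RCLike.inner_apply, Fin.sum_univ_two]]
    ring
  have hnormsq : fderiv ℝ (fun y => ‖uchi χt ρ t y‖ ^ 2) x (e2 i)
      = (g x * g x) * (2 * x i) + (‖x‖ ^ 2) * (g x * D (e2 i) + g x * D (e2 i)) := by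
    have h1 : (fun y => ‖uchi χt ρ t y‖ ^ 2) =ᶠ[nhds x]
        fun y => (g y * g y) * (inner ℝ y y : ℝ) := by
      filter_upwards [hmem] with y hy
      rw [uchi_eq χt ρ t hy, norm_smul, norm_perp, mul_pow, real_inner_self_eq_norm_sq,
        Real.norm_eq_abs, sq_abs]
      ring
    rw [h1.fderiv_eq, fderiv_fun_mul (c := fun y => g y * g y) (hgd.mul hgd) hIin]
    rw [ContinuousLinearMap.add_apply, ContinuousLinearMap.smul_apply,
      ContinuousLinearMap.smul_apply, hNin i, fderiv_fun_mul hgd hgd]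
    rw [real_inner_self_eq_norm_sq]
    simp only [ContinuousLinearMap.add_apply, ContinuousLinearMap.smul_apply, smul_eq_mul, ← hDdef]
    try ring
  have hux : uchi χt ρ t x = g x • perp x := uchi_eq χt ρ t hx
  have hkey : -(x 1) * D (e2 0) + x 0 * D (e2 1) = 0 := by
    have hp : perp x = (-(x 1)) • e2 0 + (x 0) • e2 1 := by
      conv_lhs => rw [ev_decomp (perp x)]
      simp
    rw [hp, map_add, D.map_smul, D.map_smul, smul_eq_mul, smul_eq_mul] at hDp
    exact hDp
  have hnx : ‖uchi χt ρ t x‖ ^ 2 = (g x * g x) * ‖x‖ ^ 2 := by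
    rw [hux, norm_smul, norm_perp, mul_pow, Real.norm_eq_abs, sq_abs]; ring
  have hxsq : (0:ℝ) < ‖x‖ ^ 2 := by positivity
  rw [Fin.sum_univ_two, hcomp i, hcomp 0, hcomp 1, hnormsq, hnx, hux, perp_smul, perp_perp]
  simp only [ContinuousLinearMap.add_apply, ContinuousLinearMap.smul_apply, smul_eq_mul,
    hPapp, PiLp.smul_apply, PiLp.neg_apply]
  rw [normsq_decomp x]
  have hxsq' : x 0 ^ 2 + x 1 ^ 2 ≠ 0 := by rw [← normsq_decomp]; exact ne_of_gt hxsq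
  fin_cases i
  · constructor
    · simp only [ContinuousLinearMap.add_apply, ContinuousLinearMap.smul_apply, smul_eq_mul,
        hPapp, PiLp.smul_apply, PiLp.neg_apply, perp_apply_zero, perp_apply_one, e2_apply]
      simp
      field_simp
      linear_combination 0 * hkey
    · simp only [ContinuousLinearMap.add_apply, ContinuousLinearMap.smul_apply, smul_eq_mul,
        hPapp, PiLp.smul_apply, PiLp.neg_apply, perp_apply_zero, perp_apply_one, e2_apply]
      simp
      field_simp
      linear_combination (-(g x * x 1)) * hkey
  · constructor
    · simp only [ContinuousLinearMap.add_apply, ContinuousLinearMap.smul_apply, smul_eq_mul,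
        hPapp, PiLp.smul_apply, PiLp.neg_apply, perp_apply_zero, perp_apply_one, e2_apply]
      simp
      field_simp
      linear_combination 0 * hkey
    · simp only [ContinuousLinearMap.add_apply, ContinuousLinearMap.smul_apply, smul_eq_mul,
        hPapp, PiLp.smul_apply, PiLp.neg_apply, perp_apply_zero, perp_apply_one, e2_apply]
      simp
      field_simp
      linear_combination (g x * x 0) * hkey
end
end

section
/- For all real a, b > 0, one has the exact integral identity ∫_{ℝ²} (1/|x|²) ( exp(−|x|²/(4a)) − exp(−|x|²/(4b)) )² dx = 2π log( (a+b)/(2√(ab)) ), and moreover 2π log((a+b)/(2√(ab))) ≤ π |log(a/b)|. -/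
open MeasureTheory Filter
open scoped Classical

noncomputable section

/-!
In polar coordinates the integral is `π ∫₀^∞ s⁻¹ (e^{-s/4a} - e^{-s/4b})² ds`. Expanding the square
writes the integrand as a sum of two Frullani integrands `s⁻¹ (e^{-ps} - e^{-qs})`, whose integrals
`log (q / p)` add up to `log ((a + b)² / 4ab)`. The inequality is `(a + b)² ≤ 4 max(a, b)²`.
-/

open Set Real

lemma integral_comp_sq_Ioi {F : Type*} [NormedAddCommGroup F] [NormedSpace ℝ F] (g : ℝ → F) :
    ∫ r in Ioi (0 : ℝ), r • g (r ^ 2) = (2 : ℝ)⁻¹ • ∫ s in Ioi (0 : ℝ), g s := by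
  rw [← integral_comp_rpow_Ioi_of_pos (g := g) two_pos, ← integral_smul]
  refine setIntegral_congr_fun measurableSet_Ioi fun r _ => ?_
  rw [smul_smul, show (2 : ℝ) - 1 = 1 by norm_num, rpow_one, rpow_two,
    inv_mul_cancel_left₀ two_ne_zero]

lemma integral_fun_norm_sq_fin_two {F : Type*} [NormedAddCommGroup F] [NormedSpace ℝ F]
    (g : ℝ → F) :
    ∫ x : EuclideanSpace ℝ (Fin 2), g (‖x‖ ^ 2) = π • ∫ s in Ioi (0 : ℝ), g s := by
  rw [integral_fun_norm_addHaar volume (fun r => g (r ^ 2)), ← Nat.cast_smul_eq_nsmul ℝ]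
  norm_num [Measure.real, integral_comp_sq_Ioi, smul_smul, pi_nonneg]
  ring_nf

lemma integrableOn_Ioi_inv_mul_exp_sub_exp_of_le {p q : ℝ} (hp : 0 < p) (hpq : p ≤ q) :
    IntegrableOn (fun x => x⁻¹ * (exp (-(p * x)) - exp (-(q * x)))) (Ioi 0) := by
  refine ((exp_neg_integrableOn_Ioi 0 hp).const_mul (q - p)).mono' ?_ ?_
  · exact (continuousOn_inv₀.mono fun x hx => ne_of_gt hx).mul (by fun_prop)
      |>.aestronglyMeasurable measurableSet_Ioi
  · filter_upwards [ae_restrict_mem measurableSet_Ioi] with x (hx : 0 < x)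
    have hdecay : exp (-(q * x)) ≤ exp (-(p * x)) := exp_le_exp.2 (by nlinarith)
    have hlin : exp (-(p * x)) - exp (-(q * x)) ≤ (q - p) * x * exp (-(p * x)) := by
      have := add_one_le_exp (-((q - p) * x))
      have hsplit : exp (-(q * x)) = exp (-((q - p) * x)) * exp (-(p * x)) := by
        rw [← exp_add]; ring_nf
      nlinarith [exp_pos (-(p * x))]
    rw [norm_mul, norm_inv, Real.norm_of_nonneg hx.le,
      Real.norm_of_nonneg (sub_nonneg.2 hdecay), inv_mul_le_iff₀ hx, neg_mul]
    linarith

lemma integrableOn_Ioi_inv_mul_exp_sub_exp {p q : ℝ} (hp : 0 < p) (hq : 0 < q) :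
    IntegrableOn (fun x => x⁻¹ * (exp (-(p * x)) - exp (-(q * x)))) (Ioi 0) := by
  rcases le_total p q with hpq | hqp
  · exact integrableOn_Ioi_inv_mul_exp_sub_exp_of_le hp hpq
  · refine (integrableOn_Ioi_inv_mul_exp_sub_exp_of_le hq hqp).neg.congr_fun (fun x _ => ?_)
      measurableSet_Ioi
    simp only [Pi.neg_apply]
    ring

lemma integral_Ioi_inv_mul_exp_sub_exp {p q : ℝ} (hp : 0 < p) (hq : 0 < q) :
    ∫ x in Ioi 0, x⁻¹ * (exp (-(p * x)) - exp (-(q * x))) = log (q / p) := by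
  have h := Frullani.integral_Ioi_eq (f := fun x => exp (-x)) (L := 1) (R := 0)
    (continuous_neg.rexp.locallyIntegrable.locallyIntegrableOn _) hp hq
    ((continuous_neg.rexp.tendsto' 0 1 (by simp)).mono_left nhdsWithin_le_nhds)
    tendsto_exp_neg_atTop_nhds_zero (integrableOn_Ioi_inv_mul_exp_sub_exp hp hq)
  simpa using h

lemma integral_Ioi_inv_mul_sq_exp_sub_exp {p q : ℝ} (hp : 0 < p) (hq : 0 < q) :
    ∫ x in Ioi 0, x⁻¹ * (exp (-(p * x)) - exp (-(q * x))) ^ 2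
      = log ((p + q) ^ 2 / (4 * p * q)) := by
  have hsq : ∀ x : ℝ, x⁻¹ * (exp (-(p * x)) - exp (-(q * x))) ^ 2
      = x⁻¹ * (exp (-(2 * p * x)) - exp (-((p + q) * x)))
        + x⁻¹ * (exp (-(2 * q * x)) - exp (-((p + q) * x))) := by
    intro x
    have hp2 : exp (-(2 * p * x)) = exp (-(p * x)) ^ 2 := by rw [sq, ← exp_add]; ring_nf
    have hq2 : exp (-(2 * q * x)) = exp (-(q * x)) ^ 2 := by rw [sq, ← exp_add]; ring_nf
    have hpq : exp (-((p + q) * x)) = exp (-(p * x)) * exp (-(q * x)) := by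
      rw [← exp_add]; ring_nf
    rw [hp2, hq2, hpq]
    ring
  simp_rw [hsq]
  rw [integral_add (integrableOn_Ioi_inv_mul_exp_sub_exp (by positivity) (by positivity))
      (integrableOn_Ioi_inv_mul_exp_sub_exp (by positivity) (by positivity)),
    integral_Ioi_inv_mul_exp_sub_exp (by positivity) (by positivity),
    integral_Ioi_inv_mul_exp_sub_exp (by positivity) (by positivity),
    ← log_mul (by positivity) (by positivity)]
  congr 1
  field_simp
  ring

lemma add_div_two_sqrt_mul_sq {a b : ℝ} (ha : 0 ≤ a) (hb : 0 ≤ b) :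
    ((a + b) / (2 * √(a * b))) ^ 2 = (a + b) ^ 2 / (4 * (a * b)) := by
  rw [div_pow, mul_pow, sq_sqrt (mul_nonneg ha hb)]
  norm_num

lemma two_mul_log_add_div_two_sqrt_mul_le {a b : ℝ} (ha : 0 < a) (hb : 0 < b) :
    2 * log ((a + b) / (2 * √(a * b))) ≤ |log (a / b)| := by
  wlog hba : b ≤ a generalizing a b
  · have h := this hb ha (le_of_not_ge hba)
    rwa [add_comm, mul_comm b, ← inv_div a b, log_inv, abs_neg] at h
  have hsq : (a + b) ^ 2 / (4 * (a * b)) ≤ a / b := by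
    rw [div_le_div_iff₀ (by positivity) hb]
    nlinarith [mul_le_mul_of_nonneg_left hba (by positivity : 0 ≤ a * b)]
  calc 2 * log ((a + b) / (2 * √(a * b)))
      = log ((a + b) ^ 2 / (4 * (a * b))) := by
        rw [← add_div_two_sqrt_mul_sq ha.le hb.le, log_pow]
        push_cast
        ring
    _ ≤ log (a / b) := log_le_log (by positivity) hsq
    _ ≤ |log (a / b)| := le_abs_self _

theorem gaussian_difference_integral_identity (a b : ℝ) (ha : 0 < a) (hb : 0 < b) :
    (∫ x : E2, (1 / ‖x‖ ^ 2)
        * (Real.exp (-(‖x‖ ^ 2) / (4 * a)) - Real.exp (-(‖x‖ ^ 2) / (4 * b))) ^ 2)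
      = 2 * Real.pi * Real.log ((a + b) / (2 * Real.sqrt (a * b))) ∧
    2 * Real.pi * Real.log ((a + b) / (2 * Real.sqrt (a * b)))
      ≤ Real.pi * |Real.log (a / b)| := by
  set c := (a + b) / (2 * √(a * b))
  have hratio : ((4 * a)⁻¹ + (4 * b)⁻¹) ^ 2 / (4 * (4 * a)⁻¹ * (4 * b)⁻¹) = c ^ 2 := by
    rw [add_div_two_sqrt_mul_sq ha.le hb.le]
    field_simp
    ring
  set g : ℝ → ℝ := fun s => s⁻¹ * (exp (-((4 * a)⁻¹ * s)) - exp (-((4 * b)⁻¹ * s))) ^ 2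
  constructor
  · calc _ = ∫ x : E2, g (‖x‖ ^ 2) := by congr 1 with x; simp only [g]; ring_nf
      _ = π * ∫ s in Ioi 0, g s := integral_fun_norm_sq_fin_two g
      _ = π * log (c ^ 2) := by
        rw [integral_Ioi_inv_mul_sq_exp_sub_exp (by positivity) (by positivity), hratio]
      _ = 2 * π * log c := by
        rw [log_pow]
        push_cast
        ring
  · rw [mul_comm 2 π, mul_assoc]
    exact mul_le_mul_of_nonneg_left (two_mul_log_add_div_two_sqrt_mul_le ha hb) pi_pos.le
end
end

section
/- For every ρ ≥ 1 and every t ≥ 0, the remainder R^χ = Δu^χ − ∂_t u^χ of the truncated Oseen vortex has the form R^χ(x,t) = x^⊥ Q^χ(x,t) for a radially symmetric scalar function Q^χ(·,t) (i.e. Q^χ(x,t) depends on x only through |x|). Consequently R^χ(·,t) has zero mean over the annulus D = {x ∈ ℝ² : ρ ≤ |x| ≤ 2ρ}: ∫_D R^χ(x,t) dx = 0, and hence ∫_{ℝ²} R^χ(x,t) dx = 0. -/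
open MeasureTheory Filter
open scoped Classical

noncomputable section

/-- The remainder `R^χ = Δu^χ - ∂ₜu^χ` of the truncated Oseen vortex,
computed componentwise (Laplacian in `x` minus time derivative). -/
def Rchi (χt : E2 → ℝ) (ρ t : ℝ) (x : E2) : E2 :=
  vec2
    ((∑ j : Fin 2, fderiv ℝ (fun y => fderiv ℝ (fun z => uchi χt ρ t z 0) y (e2 j)) x (e2 j))
      - deriv (fun s => uchi χt ρ s x 0) t)
    ((∑ j : Fin 2, fderiv ℝ (fun y => fderiv ℝ (fun z => uchi χt ρ t z 1) y (e2 j)) x (e2 j))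
      - deriv (fun s => uchi χt ρ s x 1) t)

/-! ### Auxiliary material -/

open scoped ContDiff Topology

lemma vec2_app0 (a b : ℝ) : vec2 a b 0 = a := rfl
lemma vec2_app1 (a b : ℝ) : vec2 a b 1 = b := rfl
lemma e2ext (x y : E2) (h0 : x 0 = y 0) (h1 : x 1 = y 1) : x = y := by
  ext i; fin_cases i <;> assumption
lemma smul_app (c : ℝ) (x : E2) (i : Fin 2) : (c • x) i = c * x i := rfl
lemma neg_app (x : E2) (i : Fin 2) : (-x) i = -(x i) := rfl
lemma smul_vec2 (c a b : ℝ) : c • vec2 a b = vec2 (c*a) (c*b) := by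
  apply e2ext <;> rfl
lemma vec2_zero : vec2 0 0 = 0 := by apply e2ext <;> rfl
lemma normsq_coords (y : E2) : ‖y‖^2 = y 0 * y 0 + y 1 * y 1 := by
  rw [EuclideanSpace.norm_eq, Real.sq_sqrt (by positivity)]
  simp [Fin.sum_univ_two]; ring
lemma norm_vec2_right0 (a : ℝ) : ‖vec2 a 0‖ = |a| := by
  rw [EuclideanSpace.norm_eq]
  simp [Fin.sum_univ_two, vec2_app0, vec2_app1, Real.sqrt_sq_eq_abs]
lemma e2_app (j i : Fin 2) : e2 j i = if i = j then (1:ℝ) else 0 := by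
  simp [e2, EuclideanSpace.single_apply]
lemma innerSL_e2 (x : E2) (j : Fin 2) : (innerSL ℝ x) (e2 j) = x j := by
  rw [innerSL_apply_apply, e2, EuclideanSpace.inner_single_right]; simp
lemma inner_e2 (x : E2) (j : Fin 2) : inner ℝ x (e2 j) = x j := by
  rw [e2, EuclideanSpace.inner_single_right]; simp
lemma proj_e2 (i j : Fin 2) : (EuclideanSpace.proj i : E2 →L[ℝ] ℝ) (e2 j) = if j = i then 1 else 0 := by
  simp [e2, EuclideanSpace.single_apply]
  exact if_congr eq_comm rfl rfl
lemma perp_neg (x : E2) : perp (-x) = - perp x := by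
  apply e2ext <;> simp [perp, vec2_app0, vec2_app1, neg_app]

/-- Laplacian of `z ↦ φ(‖z‖²) (ε zₘ)` at a nonzero point. -/
lemma lap_radial (φ : ℝ → ℝ) (hφ : ContDiffOn ℝ ∞ φ (Set.Ioi 0))
    (m : Fin 2) (ε : ℝ) (F : E2 → ℝ)
    (hF : ∀ z : E2, z ≠ 0 → F z = φ (‖z‖ ^ 2) * (ε * z m))
    (x : E2) (hx : x ≠ 0) :
    (∑ j : Fin 2, fderiv ℝ (fun y => fderiv ℝ F y (e2 j)) x (e2 j))
      = (4 * ‖x‖ ^ 2 * deriv (deriv φ) (‖x‖ ^ 2) + 8 * deriv φ (‖x‖ ^ 2)) * (ε * x m) := by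
  have hsq : ∀ y : E2, y ≠ 0 → (0:ℝ) < ‖y‖ ^ 2 := fun y hy => pow_pos (norm_pos_iff.mpr hy) 2
  have hφ' : ContDiffOn ℝ ∞ (deriv φ) (Set.Ioi 0) :=
    hφ.deriv_of_isOpen isOpen_Ioi (le_of_eq rfl)
  have hd : ∀ s : ℝ, 0 < s → HasDerivAt φ (deriv φ s) s := fun s hs =>
    (((hφ.differentiableOn (by norm_num)) s hs).differentiableAt
      (isOpen_Ioi.mem_nhds hs)).hasDerivAt
  have hd' : ∀ s : ℝ, 0 < s → HasDerivAt (deriv φ) (deriv (deriv φ) s) s := fun s hs =>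
    (((hφ'.differentiableOn (by norm_num)) s hs).differentiableAt
      (isOpen_Ioi.mem_nhds hs)).hasDerivAt
  have hA : ∀ y : E2, y ≠ 0 →
      HasFDerivAt (fun z : E2 => φ (‖z‖ ^ 2)) (deriv φ (‖y‖ ^ 2) • (2 • innerSL ℝ y)) y :=
    fun y hy => (hd _ (hsq y hy)).comp_hasFDerivAt y (hasStrictFDerivAt_norm_sq y).hasFDerivAt
  have hA' : ∀ y : E2, y ≠ 0 →
      HasFDerivAt (fun z : E2 => deriv φ (‖z‖ ^ 2))
        (deriv (deriv φ) (‖y‖ ^ 2) • (2 • innerSL ℝ y)) y :=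
    fun y hy => by
      have := (hd' _ (hsq y hy)).comp_hasFDerivAt y (hasStrictFDerivAt_norm_sq y).hasFDerivAt
      exact this
  have hB : ∀ (y : E2) (k : Fin 2) (c : ℝ),
      HasFDerivAt (fun z : E2 => c * z k) (c • (EuclideanSpace.proj k : E2 →L[ℝ] ℝ)) y :=
    fun y k c => by
    have := ((EuclideanSpace.proj k : E2 →L[ℝ] ℝ).hasFDerivAt (x := y)).const_mul c
    exact this
  have hGy : ∀ y : E2, y ≠ 0 → HasFDerivAt F
      (φ (‖y‖ ^ 2) • (ε • (EuclideanSpace.proj m : E2 →L[ℝ] ℝ))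
        + (ε * y m) • (deriv φ (‖y‖ ^ 2) • (2 • innerSL ℝ y))) y := by
    intro y hy
    refine ((hA y hy).mul (hB y m ε)).congr_of_eventuallyEq ?_
    filter_upwards [isOpen_ne.mem_nhds hy] with z hz using hF z hz
  have hfd : ∀ y : E2, y ≠ 0 → ∀ j : Fin 2, fderiv ℝ F y (e2 j)
      = φ (‖y‖ ^ 2) * (ε * (if j = m then 1 else 0))
        + (ε * y m) * (deriv φ (‖y‖ ^ 2) * (2 * y j)) := by
    intro y hy j
    rw [(hGy y hy).fderiv]
    simp [ContinuousLinearMap.add_apply, ContinuousLinearMap.smul_apply, proj_e2, innerSL_e2]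
    fin_cases j <;> fin_cases m <;> simp [e2_app] <;> ring
  have houter : ∀ j : Fin 2,
      fderiv ℝ (fun y => fderiv ℝ F y (e2 j)) x (e2 j)
        = deriv φ (‖x‖^2) * (2*x j) * (ε * (if j = m then 1 else 0))
          + (ε * (if j = m then 1 else 0)) * (deriv φ (‖x‖^2) * (2 * x j))
          + (ε * x m) * (deriv (deriv φ) (‖x‖^2) * (2*x j) * (2*x j) + deriv φ (‖x‖^2) * 2) := by
    intro j
    have hj := ((hA x hx).mul_const (ε * (if j = m then 1 else 0))).add
      ((hB x m ε).mul ((hA' x hx).mul (hB x j 2)))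
    have heq : (fun y => fderiv ℝ F y (e2 j)) =ᶠ[𝓝 x]
        (fun y => φ (‖y‖ ^ 2) * (ε * (if j = m then 1 else 0))
          + (ε * y m) * (deriv φ (‖y‖ ^ 2) * (2 * y j))) := by
      filter_upwards [isOpen_ne.mem_nhds hx] with z hz using hfd z hz j
    rw [heq.fderiv_eq, HasFDerivAt.fderiv (f := fun y : E2 => φ (‖y‖ ^ 2) * (ε * (if j = m then 1 else 0))
      + (ε * y m) * (deriv φ (‖y‖ ^ 2) * (2 * y j))) hj]
    simp [ContinuousLinearMap.add_apply, ContinuousLinearMap.smul_apply, proj_e2, innerSL_e2]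
    fin_cases j <;> fin_cases m <;> simp [e2_app, inner_e2] <;> ring
  rw [Fin.sum_univ_two, houter 0, houter 1, normsq_coords x]
  fin_cases m <;> simp [e2_app] <;> ring

/-- The radial profile of the cut-off. -/
def kf (χt : E2 → ℝ) (r : ℝ) : ℝ := χt (vec2 r 0)

/-- The radial profile (in `s = r²`) of each component of the truncated vortex. -/
def phiO (χt : E2 → ℝ) (ρ t : ℝ) (s : ℝ) : ℝ :=
  kf χt (Real.sqrt s / ρ) * ((1 - Real.exp (-s / (4 * (1 + t)))) / (2 * Real.pi * s))

/-- The radial profile of the time derivative. -/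
def NtO (χt : E2 → ℝ) (ρ t : ℝ) (s : ℝ) : ℝ :=
  deriv (fun τ => kf χt (Real.sqrt s / ρ)
    * ((1 - Real.exp (-s / (4 * (1 + τ)))) / (2 * Real.pi * s))) t

lemma chi_radial_val {χt : E2 → ℝ} (hχ_radial : ∀ x y : E2, ‖x‖ = ‖y‖ → χt x = χt y)
    {ρ : ℝ} (hρ : 0 < ρ) (z : E2) : χt (ρ⁻¹ • z) = kf χt (‖z‖ / ρ) := by
  apply hχ_radial
  rw [norm_smul, norm_vec2_right0, norm_inv, Real.norm_eq_abs,
    abs_of_pos hρ, abs_of_nonneg (by positivity)]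
  rw [div_eq_inv_mul]

lemma uchi_component {χt : E2 → ℝ} (hχ_radial : ∀ x y : E2, ‖x‖ = ‖y‖ → χt x = χt y)
    {ρ : ℝ} (hρ : 0 < ρ) (τ : ℝ) (z : E2) (hz : z ≠ 0) (i : Fin 2) :
    uchi χt ρ τ z i = (kf χt (Real.sqrt (‖z‖^2) / ρ)
      * ((1 - Real.exp (-(‖z‖ ^ 2) / (4 * (1 + τ)))) / (2 * Real.pi * ‖z‖ ^ 2))) * perp z i := by
  rw [uchi, theta, if_neg hz, smul_app, smul_app, chi_radial_val hχ_radial hρ,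
    Real.sqrt_sq (norm_nonneg z)]
  ring

lemma phiO_contDiffOn {χt : E2 → ℝ} (hχ_smooth : ContDiff ℝ (⊤ : ℕ∞) χt) (ρ t : ℝ) :
    ContDiffOn ℝ ∞ (phiO χt ρ t) (Set.Ioi 0) := by
  have hkf : ContDiff ℝ ∞ (kf χt) := by
    have h0 : (fun r : ℝ => vec2 r 0) = fun r : ℝ => r • e2 0 := by
      funext r; apply e2ext <;> simp [vec2_app0, vec2_app1, smul_app, e2_app]
    have h1 : ContDiff ℝ ∞ (fun r : ℝ => vec2 r 0) := by
      rw [h0]; exact contDiff_id.smul contDiff_const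
    exact (hχ_smooth.of_le (by simp)).comp h1
  apply ContDiffOn.mul
  · apply hkf.comp_contDiffOn
    exact ContDiffOn.div_const (fun s hs => (Real.contDiffAt_sqrt (ne_of_gt hs)).contDiffWithinAt) ρ
  · apply ContDiffOn.div
    · exact (contDiff_const.sub ((contDiff_id.neg.div_const _).exp)).contDiffOn
    · exact (contDiff_const.mul contDiff_id).contDiffOn
    · intro s hs
      exact mul_ne_zero (mul_ne_zero two_ne_zero Real.pi_ne_zero) (ne_of_gt hs)

lemma time_deriv {χt : E2 → ℝ} (hχ_radial : ∀ x y : E2, ‖x‖ = ‖y‖ → χt x = χt y)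
    {ρ : ℝ} (hρ : 0 < ρ) (t : ℝ) (x : E2) (hx : x ≠ 0) (i : Fin 2) :
    deriv (fun τ => uchi χt ρ τ x i) t = NtO χt ρ t (‖x‖^2) * perp x i := by
  have hfun : (fun τ => uchi χt ρ τ x i)
      = fun τ => (kf χt (Real.sqrt (‖x‖^2) / ρ)
        * ((1 - Real.exp (-(‖x‖ ^ 2) / (4 * (1 + τ)))) / (2 * Real.pi * ‖x‖ ^ 2))) * perp x i := by
    funext τ; exact uchi_component hχ_radial hρ τ x hx i
  rw [hfun, deriv_mul_const_field]
  rfl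

lemma rchi_zero_of_small {χt : E2 → ℝ} (hχ_zero : ∀ x : E2, ‖x‖ ≤ 1 → χt x = 0)
    {ρ : ℝ} (hρ : 0 < ρ) (t : ℝ) (x : E2) (hx : ‖x‖ < ρ) : Rchi χt ρ t x = 0 := by
  have hval : ∀ (τ : ℝ) (z : E2), ‖z‖ < ρ → uchi χt ρ τ z = 0 := by
    intro τ z hz
    have h1 : χt (ρ⁻¹ • z) = 0 := by
      apply hχ_zero
      rw [norm_smul, norm_inv, Real.norm_eq_abs, abs_of_pos hρ]
      rw [inv_mul_le_iff₀ hρ, mul_one]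
      exact hz.le
    rw [uchi, h1, zero_smul]
  have hball : IsOpen {z : E2 | ‖z‖ < ρ} := isOpen_lt continuous_norm continuous_const
  have hinner : ∀ (i : Fin 2) (j : Fin 2),
      fderiv ℝ (fun y => fderiv ℝ (fun z => uchi χt ρ t z i) y (e2 j)) x (e2 j) = 0 := by
    intro i j
    have h2 : (fun y => fderiv ℝ (fun z => uchi χt ρ t z i) y (e2 j)) =ᶠ[𝓝 x]
        (fun _ => (0:ℝ)) := by
      filter_upwards [hball.mem_nhds hx] with y hy
      have h3 : (fun z => uchi χt ρ t z i) =ᶠ[𝓝 y] (fun _ => (0:ℝ)) := by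
        filter_upwards [hball.mem_nhds hy] with z hz
        rw [hval t z hz]; rfl
      rw [h3.fderiv_eq, fderiv_fun_const]
      rfl
    rw [h2.fderiv_eq, fderiv_fun_const]
    rfl
  have htime : ∀ i : Fin 2, deriv (fun τ => uchi χt ρ τ x i) t = 0 := by
    intro i
    have : (fun τ => uchi χt ρ τ x i) = fun _ => (0:ℝ) := by
      funext τ; rw [hval τ x hx]; rfl
    rw [this, deriv_const]
  rw [Rchi, Fin.sum_univ_two, Fin.sum_univ_two, hinner 0 0, hinner 0 1, hinner 1 0, hinner 1 1,
    htime 0, htime 1]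
  simpa using vec2_zero

lemma perp_app0 (x : E2) : perp x 0 = -(x 1) := rfl
lemma perp_app1 (x : E2) : perp x 1 = x 0 := rfl

theorem truncated_oseen_remainder_radial_zero_mean
    (χt : E2 → ℝ) (hχ_smooth : ContDiff ℝ (⊤ : ℕ∞) χt)
    (hχ_radial : ∀ x y : E2, ‖x‖ = ‖y‖ → χt x = χt y)
    (hχ_zero : ∀ x : E2, ‖x‖ ≤ 1 → χt x = 0)
    (hχ_one : ∀ x : E2, 2 ≤ ‖x‖ → χt x = 1)
    (hχ_range : ∀ x : E2, χt x ∈ Set.Icc (0 : ℝ) 1)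
    (ρ : ℝ) (hρ : 1 ≤ ρ) (t : ℝ) (ht : 0 ≤ t) :
    (∃ Q : ℝ → ℝ, ∀ x : E2, Rchi χt ρ t x = Q ‖x‖ • perp x) ∧
      (∫ x in {x : E2 | ρ ≤ ‖x‖ ∧ ‖x‖ ≤ 2 * ρ}, Rchi χt ρ t x) = 0 ∧
      (∫ x : E2, Rchi χt ρ t x) = 0 := by
  have hρ0 : (0:ℝ) < ρ := lt_of_lt_of_le one_pos hρ
  set φ := phiO χt ρ t with hφdef
  have hφ : ContDiffOn ℝ ∞ φ (Set.Ioi 0) := phiO_contDiffOn hχ_smooth ρ t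
  set Q : ℝ → ℝ := fun r => if r < ρ then 0 else
    4 * r ^ 2 * deriv (deriv φ) (r ^ 2) + 8 * deriv φ (r ^ 2) - NtO χt ρ t (r ^ 2) with hQdef
  have key : ∀ x : E2, Rchi χt ρ t x = Q ‖x‖ • perp x := by
    intro x
    by_cases hx : ‖x‖ < ρ
    · rw [rchi_zero_of_small hχ_zero hρ0 t x hx, hQdef]
      simp [hx]
    · push_neg at hx
      have hx0 : x ≠ 0 := by
        intro h; rw [h, norm_zero] at hx; linarith
      have hF0 : ∀ z : E2, z ≠ 0 → uchi χt ρ t z 0 = φ (‖z‖^2) * ((-1) * z 1) := by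
        intro z hz
        rw [uchi_component hχ_radial hρ0 t z hz 0, perp_app0, hφdef]
        show _ = phiO χt ρ t (‖z‖^2) * (-1 * z 1)
        rw [phiO]
        ring
      have hF1 : ∀ z : E2, z ≠ 0 → uchi χt ρ t z 1 = φ (‖z‖^2) * ((1:ℝ) * z 0) := by
        intro z hz
        rw [uchi_component hχ_radial hρ0 t z hz 1, perp_app1, hφdef]
        show _ = phiO χt ρ t (‖z‖^2) * (1 * z 0)
        rw [phiO]
        ring
      have hL0 := lap_radial φ hφ 1 (-1) (fun z => uchi χt ρ t z 0) hF0 x hx0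
      have hL1 := lap_radial φ hφ 0 1 (fun z => uchi χt ρ t z 1) hF1 x hx0
      have hT0 := time_deriv hχ_radial hρ0 t x hx0 0
      have hT1 := time_deriv hχ_radial hρ0 t x hx0 1
      rw [Rchi, hL0, hL1, hT0, hT1, perp_app0, perp_app1, hQdef]
      simp only [if_neg (not_lt.mpr hx)]
      rw [perp, smul_vec2]
      congr 1 <;> ring
  have hodd : ∀ x : E2, Rchi χt ρ t (-x) = - Rchi χt ρ t x := by
    intro x; rw [key, key, norm_neg, perp_neg, smul_neg]
  refine ⟨⟨Q, key⟩, ?_, ?_⟩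
  · set D : Set E2 := {x : E2 | ρ ≤ ‖x‖ ∧ ‖x‖ ≤ 2 * ρ} with hD
    have hDm : MeasurableSet D := by
      have hDi : D = {x : E2 | ρ ≤ ‖x‖} ∩ {x : E2 | ‖x‖ ≤ 2*ρ} := rfl
      rw [hDi]
      exact ((isClosed_le continuous_const continuous_norm).measurableSet).inter
        ((isClosed_le continuous_norm continuous_const).measurableSet)
    rw [← integral_indicator hDm]
    set g := D.indicator (Rchi χt ρ t) with hg
    have hgneg : ∀ x : E2, g (-x) = - g x := by
      intro x
      by_cases hm : x ∈ D
      · have hm' : -x ∈ D := by simpa [hD, Set.mem_setOf_eq, norm_neg] using hm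
        rw [hg, Set.indicator_of_mem hm', Set.indicator_of_mem hm, hodd]
      · have hm' : -x ∉ D := by simpa [hD, Set.mem_setOf_eq, norm_neg] using hm
        rw [hg, Set.indicator_of_notMem hm', Set.indicator_of_notMem hm, neg_zero]
    have h1 : (∫ x : E2, g x) = - ∫ x : E2, g x := by
      calc (∫ x : E2, g x) = ∫ x : E2, g (-x) := (integral_neg_eq_self g volume).symm
        _ = ∫ x : E2, - g x := by simp only [hgneg]
        _ = - ∫ x : E2, g x := integral_neg _
    have h2 : (2:ℝ) • (∫ x : E2, g x) = 0 := by
      rw [two_smul]; exact eq_neg_iff_add_eq_zero.mp h1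
    exact (smul_eq_zero.mp h2).resolve_left (by norm_num)
  · have h1 : (∫ x : E2, Rchi χt ρ t x) = - ∫ x : E2, Rchi χt ρ t x := by
      calc (∫ x : E2, Rchi χt ρ t x) = ∫ x : E2, Rchi χt ρ t (-x) :=
          (integral_neg_eq_self (Rchi χt ρ t) volume).symm
        _ = ∫ x : E2, - Rchi χt ρ t x := by simp only [hodd]
        _ = - ∫ x : E2, Rchi χt ρ t x := integral_neg _
    have h2 : (2:ℝ) • (∫ x : E2, Rchi χt ρ t x) = 0 := by
      rw [two_smul]; exact eq_neg_iff_add_eq_zero.mp h1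
    exact (smul_eq_zero.mp h2).resolve_left (by norm_num)
end
end
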